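/- arXiv:2011.01115 — 2 statements merged into one kernel-verified Lean document; each statement's English description precedes it below -/
import Mathlib

section
/- Let d ≥ 1, m ∈ ℕ, and let V : ℝ^d → ℝ be of class C^m with all partial derivatives of order ≤ m bounded. There exists a constant C ∈ (0,∞), depending only on m, d, and ‖V‖_{C^m}, such that for every u : ℝ^d → ℂ of class C^m with all partial derivatives of order ≤ m in L², the function Ψ₀(u) = (V ⋆ |u|²)·u is of class C^m with all partial derivatives of order ≤ m in L², and ‖Ψ₀(u)‖_{H^m} ≤ C ‖u‖_{L²}² ‖u‖_{H^m}. -/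
open MeasureTheory Filter
open scoped ENNReal NNReal BigOperators Topology

noncomputable section

/-- Partial derivative in coordinate direction `i`. -/
def pd {d : ℕ} {E : Type*} [NormedAddCommGroup E] [NormedSpace ℝ E]
    (i : Fin d) (f : (Fin d → ℝ) → E) : (Fin d → ℝ) → E :=
  fun x => fderiv ℝ f x (Pi.single i 1)

/-- Iterated partial derivative associated with the multi-index `α`. -/
def md {d : ℕ} {E : Type*} [NormedAddCommGroup E] [NormedSpace ℝ E]
    (α : Fin d → ℕ) (f : (Fin d → ℝ) → E) : (Fin d → ℝ) → E :=
  (List.finRange d).foldr (fun i g => (pd i)^[α i] g) f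

/-- L² norm on ℝ^d. -/
def l2norm {d : ℕ} {E : Type*} [NormedAddCommGroup E]
    (f : (Fin d → ℝ) → E) : ℝ :=
  (eLpNorm f 2 (volume : Measure (Fin d → ℝ))).toReal

/-- Sobolev `H^m` norm. -/
def hnorm (d m : ℕ) {E : Type*} [NormedAddCommGroup E] [NormedSpace ℝ E]
    (f : (Fin d → ℝ) → E) : ℝ :=
  Real.sqrt (∑ α : Fin d → Fin (m + 1),
    if (∑ i, (α i : ℕ)) ≤ m then (l2norm (md (fun i => (α i : ℕ)) f)) ^ 2 else 0)

/-- `C^m` norm: sup over multi-indices of order at most `m` and over points. -/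
def cnorm (d m : ℕ) {E : Type*} [NormedAddCommGroup E] [NormedSpace ℝ E]
    (f : (Fin d → ℝ) → E) : ℝ :=
  ⨆ α : Fin d → Fin (m + 1), ⨆ x : Fin d → ℝ,
    if (∑ i, (α i : ℕ)) ≤ m then ‖md (fun i => (α i : ℕ)) f x‖ else 0

/-- `f` is of class `C^m` with all partial derivatives of order at most `m` bounded. -/
def ContDiffBdd (d m : ℕ) {E : Type*} [NormedAddCommGroup E] [NormedSpace ℝ E]
    (f : (Fin d → ℝ) → E) : Prop :=
  ContDiff ℝ m f ∧ ∀ α : Fin d → ℕ, (∑ i, α i) ≤ m → ∃ B : ℝ, ∀ x, ‖md α f x‖ ≤ B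

/-- `f` is of class `C^m` with all partial derivatives of order at most `m` in `L²`. -/
def ContDiffL2 (d m : ℕ) {E : Type*} [NormedAddCommGroup E] [NormedSpace ℝ E]
    (f : (Fin d → ℝ) → E) : Prop :=
  ContDiff ℝ m f ∧ ∀ α : Fin d → ℕ, (∑ i, α i) ≤ m →
    MemLp (md α f) 2 (volume : Measure (Fin d → ℝ))

/-- Fourier transform with kernel `exp(-2πi⟨x,ζ⟩)`. -/
def ftrans {d : ℕ} (f : (Fin d → ℝ) → ℂ) (ζ : Fin d → ℝ) : ℂ :=
  ∫ x : Fin d → ℝ, Complex.exp (-(2 * Real.pi * Complex.I * (∑ i, x i * ζ i))) * f x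

end

/-!
Write `ρ = ‖u‖²`, so that `Ψ₀(u) = (ρ ⋆ V) • u` with `ρ` integrable and `∫ ρ = ‖u‖²_{L²}`.
Differentiating under the integral sign gives `∂^a (ρ ⋆ V) = ρ ⋆ ∂^a V`, hence
`‖∂^a (ρ ⋆ V)‖_∞ ≤ ‖V‖_{C^m} ‖u‖²_{L²}` for `|a| ≤ m`. By the Leibniz rule, `∂^β Ψ₀(u)` is a sum
of at most `2^|β|` products `∂^a (ρ ⋆ V) • ∂^b u`, each of `L²` norm at most
`‖V‖_{C^m} ‖u‖²_{L²} ‖u‖_{H^m}`; summing the squares over the `(m + 1)^d` multi-indices gives the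
constant `√((m + 1)^d) 2^m ‖V‖_{C^m}`.
-/

open ContinuousLinearMap
open scoped Convolution

section PartialDerivatives

variable {d : ℕ} {E : Type*} [NormedAddCommGroup E] [NormedSpace ℝ E]
  {f : (Fin d → ℝ) → E}

/-- Partial derivatives along words of directions rather than multi-indices: the Leibniz rule and
differentiation under the integral sign go one letter at a time, and for `C^n` functions Schwarz's
theorem (`pdList_eq_md_count`) recovers `md`. -/
noncomputable def pdList (l : List (Fin d)) (f : (Fin d → ℝ) → E) : (Fin d → ℝ) → E :=
  l.foldr pd f

@[simp] lemma pdList_nil (f : (Fin d → ℝ) → E) : pdList [] f = f := rfl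

@[simp] lemma pdList_cons (i : Fin d) (l : List (Fin d)) (f : (Fin d → ℝ) → E) :
    pdList (i :: l) f = pd i (pdList l f) := rfl

lemma pdList_append (l₁ l₂ : List (Fin d)) (f : (Fin d → ℝ) → E) :
    pdList (l₁ ++ l₂) f = pdList l₁ (pdList l₂ f) := List.foldr_append

lemma pdList_replicate (n : ℕ) (i : Fin d) (f : (Fin d → ℝ) → E) :
    pdList (List.replicate n i) f = (pd i)^[n] f := by
  induction n with
  | zero => rfl
  | succ n ih => rw [List.replicate_succ, pdList_cons, ih, Function.iterate_succ_apply']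

def multiIndexList (α : Fin d → ℕ) : List (Fin d) :=
  (List.finRange d).flatMap fun i => List.replicate (α i) i

lemma md_eq_pdList (α : Fin d → ℕ) (f : (Fin d → ℝ) → E) :
    md α f = pdList (multiIndexList α) f := by
  unfold md multiIndexList
  induction List.finRange d with
  | nil => rfl
  | cons i l ih => rw [List.foldr_cons, ih, List.flatMap_cons, pdList_append, pdList_replicate]

lemma count_multiIndexList (α : Fin d → ℕ) (j : Fin d) : (multiIndexList α).count j = α j := by
  simp [multiIndexList, List.count_flatMap, List.count_replicate, Function.comp_def,
    ← Fin.sum_univ_def]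

lemma length_multiIndexList (α : Fin d → ℕ) : (multiIndexList α).length = ∑ i, α i := by
  simp [multiIndexList, List.length_flatMap, Fin.sum_univ_def]

lemma sum_count_eq_length (l : List (Fin d)) : ∑ i, l.count i = l.length := by
  simpa using Multiset.sum_count_eq_card (s := Finset.univ) (m := (l : Multiset (Fin d))) (by simp)

lemma perm_multiIndexList_count (l : List (Fin d)) :
    l.Perm (multiIndexList fun i => l.count i) :=
  List.perm_iff_count.2 fun j => (count_multiIndexList (fun i => l.count i) j).symm

lemma contDiff_pd {n : ℕ} (hf : ContDiff ℝ (n + 1) f) (i : Fin d) : ContDiff ℝ n (pd i f) :=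
  (hf.fderiv_right le_rfl).clm_apply contDiff_const

lemma contDiff_pdList {n : ℕ} (l : List (Fin d)) (hf : ContDiff ℝ (l.length + n) f) :
    ContDiff ℝ n (pdList l f) := by
  induction l generalizing n with
  | nil => simpa using hf
  | cons i l ih =>
    refine contDiff_pd (ih (n := n + 1) ?_) i
    simpa [add_assoc, add_comm 1 (n : WithTop ℕ∞)] using hf

lemma differentiable_pdList {n : ℕ} {l : List (Fin d)} (hf : ContDiff ℝ n f)
    (hl : l.length < n) : Differentiable ℝ (pdList l f) :=
  (contDiff_pdList (n := 1) l (hf.of_le (by exact_mod_cast hl))).differentiable one_ne_zero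

lemma fderiv_pd_apply (hf : ContDiff ℝ 2 f) (i : Fin d) (x v : Fin d → ℝ) :
    fderiv ℝ (pd i f) x v = fderiv ℝ (fderiv ℝ f) x v (Pi.single i 1) := by
  have hd : DifferentiableAt ℝ (fderiv ℝ f) x :=
    (hf.fderiv_right (m := 1) (by norm_num)).differentiable (by norm_num) x
  rw [show pd i f = fun y => fderiv ℝ f y (Pi.single i 1) from rfl,
    fderiv_clm_apply hd (differentiableAt_const _)]
  simp

lemma pd_pd_comm (hf : ContDiff ℝ 2 f) (i j : Fin d) : pd i (pd j f) = pd j (pd i f) := by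
  ext x
  simp only [pd, fderiv_pd_apply hf]
  exact hf.contDiffAt.isSymmSndFDerivAt (by simp) _ _

lemma pd_fderiv (hf : ContDiff ℝ 2 f) (i : Fin d) : pd i (fderiv ℝ f) = fderiv ℝ (pd i f) := by
  ext x v
  rw [fderiv_pd_apply hf]
  exact hf.contDiffAt.isSymmSndFDerivAt (by simp) _ _

lemma pdList_perm {n : ℕ} {l₁ l₂ : List (Fin d)} (hp : l₁.Perm l₂) (hf : ContDiff ℝ n f)
    (hl : l₁.length ≤ n) : pdList l₁ f = pdList l₂ f := by
  induction hp with
  | nil => rfl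
  | cons i _ ih => simp only [pdList_cons, ih (by grind)]
  | swap i j l =>
    exact pd_pd_comm (contDiff_pdList l (hf.of_le (by simp at hl; exact_mod_cast hl))) j i
  | trans hp₁ _ ih₁ ih₂ => rw [ih₁ hl, ih₂ (hp₁.length_eq ▸ hl)]

lemma pdList_eq_md_count {n : ℕ} (l : List (Fin d)) (hf : ContDiff ℝ n f) (hl : l.length ≤ n) :
    pdList l f = md (fun i => l.count i) f := by
  rw [md_eq_pdList, pdList_perm (perm_multiIndexList_count l) hf hl]

lemma pdList_fderiv (l : List (Fin d)) (hf : ContDiff ℝ (l.length + 1) f) :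
    pdList l (fderiv ℝ f) = fderiv ℝ (pdList l f) := by
  induction l with
  | nil => rfl
  | cons i l ih =>
    rw [pdList_cons, ih (hf.of_le (by simp)), pdList_cons,
      pd_fderiv (contDiff_pdList l (hf.of_le (by simp [add_assoc, one_add_one_eq_two])))]

end PartialDerivatives

section BoundedPartials

variable {d : ℕ} {E : Type*} [NormedAddCommGroup E] [NormedSpace ℝ E]
  {f : (Fin d → ℝ) → E} {n k : ℕ}

def BddPartials (n : ℕ) (f : (Fin d → ℝ) → E) : Prop :=
  ContDiff ℝ n f ∧ ∃ B, ∀ l : List (Fin d), l.length ≤ n → ∀ x, ‖pdList l f x‖ ≤ B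

lemma BddPartials.mono (hf : BddPartials n f) (hk : k ≤ n) : BddPartials k f :=
  ⟨hf.1.of_le (by exact_mod_cast hk), hf.2.imp fun _ hB l hl => hB l (hl.trans hk)⟩

lemma BddPartials.exists_bound (hf : BddPartials n f) : ∃ B, ∀ x, ‖f x‖ ≤ B :=
  hf.2.imp fun _ hB => hB [] (Nat.zero_le _)

lemma BddPartials.pdList (hf : BddPartials n f) (l : List (Fin d)) (hl : l.length + k ≤ n) :
    BddPartials k (pdList l f) := by
  obtain ⟨B, hB⟩ := hf.2
  refine ⟨contDiff_pdList l (hf.1.of_le (by exact_mod_cast hl)), B, fun l' hl' => ?_⟩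
  rw [← pdList_append]
  exact hB _ (by simp; omega)

lemma BddPartials.fderiv (hf : BddPartials (n + 1) f) : BddPartials n (fderiv ℝ f) := by
  obtain ⟨B, hB⟩ := hf.2
  obtain ⟨C, -, hC⟩ := (Pi.basisFun ℝ (Fin d)).exists_opNorm_le (F := E)
  refine ⟨hf.1.fderiv_right le_rfl, C * B, fun l hl x => ?_⟩
  rw [pdList_fderiv l (hf.1.of_le (by exact_mod_cast Nat.succ_le_succ hl))]
  refine hC ((norm_nonneg _).trans (hB [] (Nat.zero_le _) 0)) fun i => ?_
  rw [Pi.basisFun_apply]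
  exact hB (i :: l) (by simp [hl]) x

lemma ContDiffBdd.bddPartials {m : ℕ} (hf : ContDiffBdd d m f) : BddPartials m f := by
  obtain ⟨hfm, hbdd⟩ := hf
  have hev : ∀ᶠ C in atTop, ∀ α : Fin d → Fin (m + 1), ∑ i, (α i : ℕ) ≤ m →
      ∀ x, ‖md (fun i => (α i : ℕ)) f x‖ ≤ C := by
    refine eventually_all.2 fun α => ?_
    by_cases hα : ∑ i, (α i : ℕ) ≤ m
    · obtain ⟨B, hB⟩ := hbdd _ hα
      filter_upwards [eventually_ge_atTop B] with C hC _ x using (hB x).trans hC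
    · exact .of_forall fun _ h => absurd h hα
  obtain ⟨C, hC⟩ := hev.exists
  refine ⟨hfm, C, fun l hl x => ?_⟩
  rw [pdList_eq_md_count l hfm hl]
  exact hC (fun i => ⟨l.count i, Nat.lt_succ_of_le (List.count_le_length.trans hl)⟩)
    ((sum_count_eq_length l).trans_le hl) x

end BoundedPartials

section Convolution

variable {d : ℕ} {E : Type*} [NormedAddCommGroup E] [NormedSpace ℝ E]
  {h : (Fin d → ℝ) → ℝ} {f : (Fin d → ℝ) → E} {B : ℝ}

lemma integrable_smul_comp_sub (hh : Integrable h) (hf : Continuous f) (hB : ∀ x, ‖f x‖ ≤ B)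
    (x : Fin d → ℝ) : Integrable fun t => h t • f (x - t) :=
  (BddAbove.convolutionExistsAt (L := lsmul ℝ ℝ) (s := Set.univ)
    ⟨B, by rintro _ ⟨y, -, rfl⟩; exact hB y⟩ MeasurableSet.univ (Set.subset_univ _)
    hh.integrableOn hf.aestronglyMeasurable).integrable

lemma norm_convolution_le (hh : Integrable h) (hB : ∀ x, ‖f x‖ ≤ B) (x : Fin d → ℝ) :
    ‖(h ⋆[lsmul ℝ ℝ] f) x‖ ≤ B * ∫ t, ‖h t‖ := by
  rw [convolution_lsmul, ← integral_const_mul]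
  refine norm_integral_le_of_norm_le (hh.norm.const_mul B) (ae_of_all _ fun t => ?_)
  rw [norm_smul, mul_comm]
  exact mul_le_mul_of_nonneg_right (hB _) (norm_nonneg _)

lemma hasFDerivAt_convolution (hh : Integrable h) (hf : BddPartials 1 f) (x₀ : Fin d → ℝ) :
    HasFDerivAt (h ⋆[lsmul ℝ ℝ] f) ((h ⋆[lsmul ℝ ℝ] fderiv ℝ f) x₀) x₀ := by
  obtain ⟨B, hB⟩ := hf.exists_bound
  obtain ⟨B', hB'⟩ := (hf.fderiv (n := 0)).exists_bound
  have hf₁ : Differentiable ℝ f := hf.1.differentiable one_ne_zero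
  have hf' : Continuous (fderiv ℝ f) := hf.1.continuous_fderiv one_ne_zero
  refine hasFDerivAt_integral_of_dominated_of_fderiv_le
    (F' := fun x t => h t • fderiv ℝ f (x - t)) (bound := fun t => B' * ‖h t‖)
    (Metric.ball_mem_nhds x₀ one_pos)
    (.of_forall fun x => (integrable_smul_comp_sub hh hf₁.continuous hB x).aestronglyMeasurable)
    (integrable_smul_comp_sub hh hf₁.continuous hB x₀)
    (integrable_smul_comp_sub hh hf' hB' x₀).aestronglyMeasurable
    (ae_of_all _ fun t x _ => ?_) (hh.norm.const_mul B') (ae_of_all _ fun t x _ => ?_)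
  · rw [norm_smul, mul_comm]
    exact mul_le_mul_of_nonneg_right (hB' _) (norm_nonneg _)
  · exact (((hf₁ _).hasFDerivAt.comp x ((hasFDerivAt_id x).sub_const t))).const_smul (h t)

lemma fderiv_convolution (hh : Integrable h) (hf : BddPartials 1 f) :
    fderiv ℝ (h ⋆[lsmul ℝ ℝ] f) = h ⋆[lsmul ℝ ℝ] fderiv ℝ f :=
  funext fun x => (hasFDerivAt_convolution hh hf x).fderiv

lemma contDiff_convolution [CompleteSpace E] (hh : Integrable h) (hf : BddPartials n f) :
    ContDiff ℝ n (h ⋆[lsmul ℝ ℝ] f) := by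
  induction n generalizing E with
  | zero =>
    obtain ⟨B, hB⟩ := hf.exists_bound
    exact contDiff_zero.2 <| BddAbove.continuous_convolution_right_of_integrable _
      ⟨B, by rintro _ ⟨y, rfl⟩; exact hB y⟩ hh hf.1.continuous
  | succ n ih =>
    have hf₁ := hf.mono (Nat.le_add_left 1 n)
    rw [Nat.cast_succ, contDiff_succ_iff_fderiv, fderiv_convolution hh hf₁]
    exact ⟨fun x => (hasFDerivAt_convolution hh hf₁ x).differentiableAt, by simp,
      ih hf.fderiv⟩

lemma pd_convolution (hh : Integrable h) (hf : BddPartials 1 f) (i : Fin d) :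
    pd i (h ⋆[lsmul ℝ ℝ] f) = h ⋆[lsmul ℝ ℝ] pd i f := by
  obtain ⟨B', hB'⟩ := (hf.fderiv (n := 0)).exists_bound
  ext x
  rw [pd, fderiv_convolution hh hf, convolution_lsmul,
    integral_apply (integrable_smul_comp_sub hh (hf.1.continuous_fderiv one_ne_zero) hB' x)]
  rfl

lemma pdList_convolution (hh : Integrable h) (hf : BddPartials n f) (l : List (Fin d))
    (hl : l.length ≤ n) : pdList l (h ⋆[lsmul ℝ ℝ] f) = h ⋆[lsmul ℝ ℝ] pdList l f := by
  induction l with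
  | nil => rfl
  | cons i l ih =>
    simp only [List.length_cons] at hl
    rw [pdList_cons, ih (by omega), pd_convolution hh (hf.pdList l (by omega)), pdList_cons]

end Convolution

section Leibniz

variable {d : ℕ} {F : Type*} [NormedAddCommGroup F] [NormedSpace ℝ F]
  {a : (Fin d → ℝ) → ℝ} {b : (Fin d → ℝ) → F}

lemma pd_smul {x : Fin d → ℝ} (ha : DifferentiableAt ℝ a x) (hb : DifferentiableAt ℝ b x)
    (i : Fin d) : pd i (fun y => a y • b y) x = a x • pd i b x + pd i a x • b x := by
  simp [pd, fderiv_fun_smul ha hb]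

lemma pd_finset_sum {ι : Type*} (s : Finset ι) {g : ι → (Fin d → ℝ) → F} {x : Fin d → ℝ}
    (hg : ∀ j ∈ s, DifferentiableAt ℝ (g j) x) (i : Fin d) :
    pd i (fun y => ∑ j ∈ s, g j y) x = ∑ j ∈ s, pd i (g j) x := by
  simp [pd, fderiv_fun_sum hg]

theorem pdList_smul_eq_sum {n : ℕ} (ha : ContDiff ℝ n a) (hb : ContDiff ℝ n b)
    (l : List (Fin d)) (hl : l.length ≤ n) :
    ∃ (k : ℕ) (p q : Fin k → List (Fin d)), k ≤ 2 ^ l.length ∧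
      (∀ j, (p j).Sublist l ∧ (q j).Sublist l) ∧
      pdList l (fun x => a x • b x) = fun x => ∑ j, pdList (p j) a x • pdList (q j) b x := by
  induction l with
  | nil => exact ⟨1, fun _ => [], fun _ => [], le_rfl, fun _ => ⟨.slnil, .slnil⟩, by ext; simp⟩
  | cons i l ih =>
    simp only [List.length_cons] at hl
    obtain ⟨k, p, q, hk, hpq, heq⟩ := ih (by omega)
    refine ⟨k + k, Fin.append p fun j => i :: p j, Fin.append (fun j => i :: q j) q,
      by rw [List.length_cons, pow_succ]; omega, fun j => ?_, ?_⟩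
    · refine Fin.addCases (fun j => ?_) (fun j => ?_) j
      · rw [Fin.append_left, Fin.append_left]
        exact ⟨(hpq j).1.cons i, (hpq j).2.cons_cons i⟩
      · rw [Fin.append_right, Fin.append_right]
        exact ⟨(hpq j).1.cons_cons i, (hpq j).2.cons i⟩
    ext x
    have hp j : DifferentiableAt ℝ (pdList (p j) a) x :=
      differentiable_pdList ha ((hpq j).1.length_le.trans_lt hl) x
    have hq j : DifferentiableAt ℝ (pdList (q j) b) x :=
      differentiable_pdList hb ((hpq j).2.length_le.trans_lt hl) x
    rw [pdList_cons, heq, pd_finset_sum (g := fun j y => pdList (p j) a y • pdList (q j) b y) _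
      (fun j _ => (hp j).smul (hq j)), Fin.sum_univ_add]
    simp only [pd_smul (hp _) (hq _), Finset.sum_add_distrib, Fin.append_left, Fin.append_right,
      pdList_cons]

end Leibniz

lemma integral_norm_sq_eq_l2norm_sq {d : ℕ} {G : Type*} [NormedAddCommGroup G]
    {f : (Fin d → ℝ) → G} (hf : MemLp f 2) :
    ∫ x, ‖f x‖ ^ 2 = l2norm f ^ 2 := by
  have hnn : 0 ≤ ∫ x, ‖f x‖ ^ 2 := integral_nonneg fun _ => by positivity
  rw [l2norm, hf.eLpNorm_eq_integral_rpow_norm two_ne_zero ENNReal.ofNat_ne_top,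
    ENNReal.toReal_ofReal (by positivity)]
  simp only [ENNReal.toReal_ofNat, Real.rpow_two]
  exact (Real.rpow_inv_natCast_pow hnn two_ne_zero).symm

section SobolevNorm

variable {d m : ℕ} {E : Type*} [NormedAddCommGroup E] [NormedSpace ℝ E]
  {f : (Fin d → ℝ) → E}

lemma l2norm_md_le_hnorm (f : (Fin d → ℝ) → E) {β : Fin d → ℕ} (hβ : ∑ i, β i ≤ m) :
    l2norm (md β f) ≤ hnorm d m f := by
  have hlt i : β i < m + 1 :=
    Nat.lt_succ_of_le <|
      (Finset.single_le_sum (fun _ _ => Nat.zero_le _) (Finset.mem_univ i)).trans hβ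
  refine Real.le_sqrt_of_sq_le (Eq.trans_le ?_ (Finset.single_le_sum
    (f := fun α : Fin d → Fin (m + 1) =>
      if ∑ i, (α i : ℕ) ≤ m then l2norm (md (fun i => (α i : ℕ)) f) ^ 2 else 0)
    (fun α _ => by split_ifs <;> positivity)
    (Finset.mem_univ fun i => (⟨β i, hlt i⟩ : Fin (m + 1)))))
  simp [hβ]

lemma hnorm_le_of_forall_l2norm_md_le {K : ℝ}
    (h : ∀ β : Fin d → ℕ, ∑ i, β i ≤ m → l2norm (md β f) ≤ K) :
    hnorm d m f ≤ √((m + 1) ^ d) * K := by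
  have hK : 0 ≤ K := ENNReal.toReal_nonneg.trans (h 0 (by simp))
  rw [← Real.sqrt_sq hK, ← Real.sqrt_mul (by positivity)]
  refine Real.sqrt_le_sqrt ?_
  calc _ ≤ ∑ _α : Fin d → Fin (m + 1), K ^ 2 := Finset.sum_le_sum fun α _ => by
          split_ifs with hα
          · exact pow_le_pow_left₀ ENNReal.toReal_nonneg (h _ hα) 2
          · positivity
    _ = (m + 1) ^ d * K ^ 2 := by simp

lemma ContDiffL2.memLp_pdList_and_eLpNorm_le (hf : ContDiffL2 d m f) {l : List (Fin d)}
    (hl : l.length ≤ m) :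
    MemLp (pdList l f) 2 ∧ eLpNorm (pdList l f) 2 ≤ ENNReal.ofReal (hnorm d m f) := by
  have hα : ∑ i, l.count i ≤ m := (sum_count_eq_length l).trans_le hl
  rw [pdList_eq_md_count l hf.1 hl]
  have hmem := hf.2 _ hα
  exact ⟨hmem, (ENNReal.le_ofReal_iff_toReal_le hmem.2.ne (Real.sqrt_nonneg _)).2
    (l2norm_md_le_hnorm f hα)⟩

lemma ContDiffL2.memLp (hf : ContDiffL2 d m f) : MemLp f 2 :=
  (hf.memLp_pdList_and_eLpNorm_le (l := []) (Nat.zero_le m)).1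

end SobolevNorm

lemma eLpNorm_sum_le_card_mul {α ι F : Type*} [MeasurableSpace α] {μ : Measure α}
    [NormedAddCommGroup F] {p : ENNReal} (hp : 1 ≤ p) (s : Finset ι) {f : ι → α → F}
    (hf : ∀ i ∈ s, AEStronglyMeasurable (f i) μ) {C : ENNReal}
    (hC : ∀ i ∈ s, eLpNorm (f i) p μ ≤ C) : eLpNorm (∑ i ∈ s, f i) p μ ≤ s.card * C :=
  (eLpNorm_sum_le hf hp).trans ((Finset.sum_le_sum hC).trans_eq (by simp))

section ProductEstimate

variable {d m : ℕ} {F : Type*} [NormedAddCommGroup F] [NormedSpace ℝ F]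
  {g : (Fin d → ℝ) → ℝ} {u : (Fin d → ℝ) → F} {K : ℝ}

lemma memLp_pdList_smul_and_eLpNorm_le (hg : ContDiff ℝ m g)
    (hgK : ∀ l : List (Fin d), l.length ≤ m → ∀ x, ‖pdList l g x‖ ≤ K) (hu : ContDiffL2 d m u)
    {l : List (Fin d)} (hl : l.length ≤ m) :
    MemLp (pdList l fun x => g x • u x) 2 ∧
      eLpNorm (pdList l fun x => g x • u x) 2 ≤ ENNReal.ofReal (2 ^ m * K * hnorm d m u) := by
  obtain ⟨k, p, q, hk, hpq, heq⟩ := pdList_smul_eq_sum hg hu.1 l hl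
  have hK : 0 ≤ K := (norm_nonneg _).trans (hgK [] (Nat.zero_le m) 0)
  have hterm j : MemLp (fun x => pdList (p j) g x • pdList (q j) u x) 2 ∧
      eLpNorm (fun x => pdList (p j) g x • pdList (q j) u x) 2
        ≤ ENNReal.ofReal (K * hnorm d m u) := by
    have hpl := (hpq j).1.length_le.trans hl
    obtain ⟨hmem, hle⟩ := hu.memLp_pdList_and_eLpNorm_le ((hpq j).2.length_le.trans hl)
    have hbound : ∀ᵐ x, ‖pdList (p j) g x • pdList (q j) u x‖ ≤ K * ‖pdList (q j) u x‖ :=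
      ae_of_all _ fun x => by
        rw [norm_smul]
        exact mul_le_mul_of_nonneg_right (hgK _ hpl x) (norm_nonneg _)
    have hcont : Continuous (pdList (p j) g) :=
      (contDiff_pdList (n := 0) (p j) (hg.of_le (by simpa using hpl))).continuous
    refine ⟨hmem.of_le_mul (hcont.aestronglyMeasurable.smul hmem.1) hbound, ?_⟩
    rw [ENNReal.ofReal_mul hK]
    exact (eLpNorm_le_mul_eLpNorm_of_ae_le_mul hbound 2).trans (by gcongr)
  have hsum : (fun x => ∑ j, pdList (p j) g x • pdList (q j) u x) =
      ∑ j, fun x => pdList (p j) g x • pdList (q j) u x := (Finset.sum_fn _ _).symm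
  rw [heq, hsum]
  refine ⟨memLp_finsetSum' _ fun j _ => (hterm j).1, ?_⟩
  refine (eLpNorm_sum_le_card_mul one_le_two _ (fun j _ => (hterm j).1.1)
    fun j _ => (hterm j).2).trans ?_
  rw [Finset.card_univ, Fintype.card_fin, mul_assoc,
    ENNReal.ofReal_mul (p := 2 ^ m) (by positivity), ENNReal.ofReal_pow zero_le_two,
    ENNReal.ofReal_ofNat]
  gcongr
  exact_mod_cast hk.trans (Nat.pow_le_pow_right two_pos hl)

theorem ContDiffL2.smul_and_hnorm_le (hg : ContDiff ℝ m g)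
    (hgK : ∀ l : List (Fin d), l.length ≤ m → ∀ x, ‖pdList l g x‖ ≤ K) (hu : ContDiffL2 d m u) :
    ContDiffL2 d m (fun x => g x • u x) ∧
      hnorm d m (fun x => g x • u x) ≤ √((m + 1) ^ d) * (2 ^ m * K * hnorm d m u) := by
  have hK : 0 ≤ K := (norm_nonneg _).trans (hgK [] (Nat.zero_le m) 0)
  have hβ β (hβ : ∑ i, β i ≤ m) := memLp_pdList_smul_and_eLpNorm_le hg hgK hu
    (l := multiIndexList β) (by rwa [length_multiIndexList])
  refine ⟨⟨hg.smul hu.1, fun β hβ' => ?_⟩, hnorm_le_of_forall_l2norm_md_le fun β hβ' => ?_⟩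
  · rw [md_eq_pdList]
    exact (hβ β hβ').1
  · rw [l2norm, md_eq_pdList]
    exact ENNReal.toReal_le_of_le_ofReal (mul_nonneg (by positivity) (Real.sqrt_nonneg _))
      (hβ β hβ').2

end ProductEstimate

theorem statement3_general (d m : ℕ) (V : (Fin d → ℝ) → ℝ)
    (hV : ContDiffBdd d m V) :
    ∃ C : ℝ, 0 < C ∧ ∀ u : (Fin d → ℝ) → ℂ, ContDiffL2 d m u →
      ContDiffL2 d m (fun x => ((∫ y, V (x - y) * ‖u y‖ ^ 2 : ℝ) : ℂ) * u x) ∧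
      hnorm d m (fun x => ((∫ y, V (x - y) * ‖u y‖ ^ 2 : ℝ) : ℂ) * u x)
        ≤ C * l2norm u ^ 2 * hnorm d m u := by
  have hVm := hV.bddPartials
  obtain ⟨B, hB⟩ := hVm.2
  refine ⟨√((m + 1) ^ d) * 2 ^ m * max B 1, by positivity, fun u hu => ?_⟩
  set ρ : (Fin d → ℝ) → ℝ := fun y => ‖u y‖ ^ 2
  have hρ : Integrable ρ := by
    simpa [ρ] using hu.memLp.integrable_norm_pow (p := 2) two_ne_zero
  have hρ_norm : ∫ y, ‖ρ y‖ = l2norm u ^ 2 := by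
    simp [ρ, integral_norm_sq_eq_l2norm_sq hu.memLp]
  have hΨ : (fun x => ((∫ y, V (x - y) * ‖u y‖ ^ 2 : ℝ) : ℂ) * u x) =
      fun x => (ρ ⋆[lsmul ℝ ℝ] V) x • u x := by
    ext x
    simp [convolution_lsmul, Complex.real_smul, ρ, mul_comm]
  have hg l (hl : l.length ≤ m) x : ‖pdList l (ρ ⋆[lsmul ℝ ℝ] V) x‖ ≤ max B 1 * l2norm u ^ 2 := by
    rw [pdList_convolution hρ hVm l hl, ← hρ_norm]
    exact norm_convolution_le hρ (fun y => (hB l hl y).trans (le_max_left _ _)) x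
  obtain ⟨hΨL2, hΨnorm⟩ := hu.smul_and_hnorm_le (contDiff_convolution hρ hVm) hg
  rw [hΨ]
  exact ⟨hΨL2, hΨnorm.trans_eq (by ring)⟩

theorem statement3 (d m : ℕ) (hd : 1 ≤ d) (V : (Fin d → ℝ) → ℝ)
    (hV : ContDiffBdd d m V) :
    ∃ C : ℝ, 0 < C ∧ ∀ u : (Fin d → ℝ) → ℂ, ContDiffL2 d m u →
      ContDiffL2 d m (fun x => ((∫ y, V (x - y) * ‖u y‖ ^ 2 : ℝ) : ℂ) * u x) ∧
      hnorm d m (fun x => ((∫ y, V (x - y) * ‖u y‖ ^ 2 : ℝ) : ℂ) * u x)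
        ≤ C * l2norm u ^ 2 * hnorm d m u :=
  statement3_general d m V hV
end

section
/- Let (Ω, 𝓕, ℙ) be a probability space, let T ∈ (0,∞), N ∈ ℕ with N ≥ 1, and set τ = T/N; assume τ ≤ 1. Let X_0, …, X_N : Ω → [0,∞) be measurable, let p, q ∈ [1,∞) with p ≤ q, let ε ∈ (0,1) with q ε ≥ 1, and let K ∈ [0,∞) be such that (𝔼[X_n^q])^{1/q} ≤ K τ for every n ∈ {0, …, N}. Then (𝔼[(max_{0 ≤ n ≤ N} X_n)^p])^{1/p} ≤ (2T)^{1/q} K τ^{1−ε}. -/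
open MeasureTheory Filter
open scoped ENNReal NNReal BigOperators Topology

/-!
On a probability space the `L^p` norm is at most the `L^q` norm, so it suffices to bound the
`L^q` norm of the maximum. Since `(max_n X_n)^q ≤ ∑_n X_n^q`, that norm is at most
`(N + 1)^(1/q) K τ ≤ (2T)^(1/q) K τ^(1 - 1/q)`, using `(N + 1) τ ≤ 2T`; finally
`τ^(1 - 1/q) ≤ τ^(1 - ε)` because `τ ≤ 1` and `1/q ≤ ε`.
-/

theorem Finset.measurable_sup_apply {δ α ι : Type*} [MeasurableSpace δ] [MeasurableSpace α]
    [SemilatticeSup α] [OrderBot α] [MeasurableSup₂ α] {s : Finset ι} {f : ι → δ → α}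
    (hf : ∀ i ∈ s, Measurable (f i)) : Measurable fun x => s.sup (f · x) := by
  have hsup : (fun x => s.sup (f · x)) = s.sup f := funext fun x => (s.sup_apply f x).symm
  exact hsup ▸ Finset.sup_induction (p := Measurable) measurable_const
    (fun _ h₁ _ h₂ => h₁.sup h₂) hf

theorem ENNReal.finset_sup_rpow_le_sum {ι : Type*} {q : ℝ} (hq : 0 < q) (s : Finset ι)
    (g : ι → ℝ≥0∞) : s.sup g ^ q ≤ ∑ i ∈ s, g i ^ q :=
  s.apply_sup_le_sum (f := (· ^ q)) (ENNReal.zero_rpow_of_pos hq) fun {a b} => by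
    rcases le_total a b with h | h
    · simp only [sup_of_le_right h, le_add_self]
    · simp only [sup_of_le_left h, le_self_add]

theorem eLpNorm'_finset_sup_le {α ι : Type*} [MeasurableSpace α] {μ : Measure α} {q : ℝ}
    (hq : 0 < q) {s : Finset ι} {f : ι → α → ℝ≥0∞} (hf : ∀ i ∈ s, AEMeasurable (f i) μ)
    {C : ℝ≥0∞} (hC : ∀ i ∈ s, eLpNorm' (f i) q μ ≤ C) :
    eLpNorm' (fun a => s.sup (f · a)) q μ ≤ (s.card : ℝ≥0∞) ^ (1 / q) * C := by
  have hpow : eLpNorm' (fun a => s.sup (f · a)) q μ ^ q ≤ s.card * C ^ q :=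
    calc eLpNorm' (fun a => s.sup (f · a)) q μ ^ q
        = ∫⁻ a, s.sup (f · a) ^ q ∂μ := (lintegral_rpow_enorm_eq_rpow_eLpNorm' hq).symm
      _ ≤ ∫⁻ a, ∑ i ∈ s, f i a ^ q ∂μ :=
          lintegral_mono fun a => ENNReal.finset_sup_rpow_le_sum hq s (f · a)
      _ = ∑ i ∈ s, eLpNorm' (f i) q μ ^ q := by
          rw [lintegral_finsetSum' _ fun i hi => (hf i hi).pow_const q]
          exact Finset.sum_congr rfl fun i _ => lintegral_rpow_enorm_eq_rpow_eLpNorm' (f := f i) hq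
      _ ≤ ∑ _i ∈ s, C ^ q := Finset.sum_le_sum fun i hi => by gcongr; exact hC i hi
      _ = s.card * C ^ q := by rw [Finset.sum_const, nsmul_eq_mul]
  calc eLpNorm' (fun a => s.sup (f · a)) q μ
      = (eLpNorm' (fun a => s.sup (f · a)) q μ ^ q) ^ (1 / q) := by
        rw [← ENNReal.rpow_mul, mul_one_div_cancel hq.ne', ENNReal.rpow_one]
    _ ≤ (s.card * C ^ q) ^ (1 / q) := by gcongr
    _ = (s.card : ℝ≥0∞) ^ (1 / q) * C := by
        rw [ENNReal.mul_rpow_of_nonneg _ _ (by positivity), ← ENNReal.rpow_mul,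
          mul_one_div_cancel hq.ne', ENNReal.rpow_one]

theorem Nat.cast_add_one_mul_div_le {N : ℕ} (hN : 1 ≤ N) {T : ℝ} (hT : 0 ≤ T) :
    ((N : ℝ) + 1) * (T / N) ≤ 2 * T := by
  have hN₁ : (1 : ℝ) ≤ N := by exact_mod_cast hN
  rw [mul_div_assoc', div_le_iff₀ (by linarith)]
  nlinarith

theorem rpow_one_div_mul_le_of_mul_le {a b τ q ε : ℝ} (ha : 0 ≤ a) (hτ₀ : 0 < τ) (hτ₁ : τ ≤ 1)
    (hq : 0 < q) (hqε : 1 ≤ q * ε) (hab : a * τ ≤ b) :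
    a ^ (1 / q) * τ ≤ b ^ (1 / q) * τ ^ (1 - ε) := by
  have haτ : 0 ≤ a * τ := mul_nonneg ha hτ₀.le
  have hεq : 1 / q ≤ ε := by rw [div_le_iff₀ hq]; linarith
  calc a ^ (1 / q) * τ = (a * τ) ^ (1 / q) * τ ^ (1 - 1 / q) := by
        rw [Real.mul_rpow ha hτ₀.le, mul_assoc, ← Real.rpow_add hτ₀, add_sub_cancel,
          Real.rpow_one]
    _ ≤ b ^ (1 / q) * τ ^ (1 - ε) :=
        mul_le_mul (Real.rpow_le_rpow haτ hab (by positivity))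
          (Real.rpow_le_rpow_of_exponent_ge hτ₀ hτ₁ (by linarith)) (by positivity)
          (Real.rpow_nonneg (haτ.trans hab) _)

theorem statement16_general {Ω : Type*} [MeasurableSpace Ω] (P : Measure Ω) [IsProbabilityMeasure P]
    (T : ℝ) (hT : 0 < T) (N : ℕ) (hN : 1 ≤ N) (τ : ℝ) (hτdef : τ = T / N) (hτ : τ ≤ 1)
    (X : ℕ → Ω → ℝ≥0) (hX : ∀ n ≤ N, Measurable (X n))
    (p q : ℝ) (hp : 1 ≤ p) (hpq : p ≤ q)
    (ε : ℝ) (hqε : 1 ≤ q * ε)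
    (K : ℝ) (hK : 0 ≤ K)
    (hmom : ∀ n ≤ N, (∫⁻ ω, ((X n ω : ℝ≥0∞)) ^ q ∂P) ^ (1 / q) ≤ ENNReal.ofReal (K * τ)) :
    (∫⁻ ω, ((((Finset.Iic N).sup fun n => X n ω) : ℝ≥0∞)) ^ p ∂P) ^ (1 / p)
      ≤ ENNReal.ofReal ((2 * T) ^ (1 / q) * K * τ ^ (1 - ε)) := by
  have hq : 0 < q := by linarith
  have hN₀ : (0 : ℝ) < N := by exact_mod_cast hN
  have hτ₀ : 0 < τ := by rw [hτdef]; positivity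
  set M : Ω → ℝ≥0∞ := fun ω => (Finset.Iic N).sup fun n => (X n ω : ℝ≥0∞)
  have hM : Measurable M :=
    Finset.measurable_sup_apply fun n hn => (hX n (Finset.mem_Iic.mp hn)).coe_nnreal_ennreal
  have hLq : eLpNorm' M q P ≤ ((N : ℝ≥0∞) + 1) ^ (1 / q) * ENNReal.ofReal (K * τ) := by
    simpa using eLpNorm'_finset_sup_le hq
      (fun n hn => (hX n (Finset.mem_Iic.mp hn)).coe_nnreal_ennreal.aemeasurable)
      (fun n hn => hmom n (Finset.mem_Iic.mp hn))
  have hreal : ((N : ℝ) + 1) ^ (1 / q) * (K * τ) ≤ (2 * T) ^ (1 / q) * K * τ ^ (1 - ε) := by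
    have h := rpow_one_div_mul_le_of_mul_le (by positivity) hτ₀ hτ hq hqε
      (hτdef ▸ Nat.cast_add_one_mul_div_le hN hT.le)
    linarith [mul_le_mul_of_nonneg_left h hK]
  calc _ = eLpNorm' M p P := rfl
    _ ≤ eLpNorm' M q P :=
        eLpNorm'_le_eLpNorm'_of_exponent_le (by linarith) hpq P hM.aestronglyMeasurable
    _ ≤ ((N : ℝ≥0∞) + 1) ^ (1 / q) * ENNReal.ofReal (K * τ) := hLq
    _ = ENNReal.ofReal (((N : ℝ) + 1) ^ (1 / q) * (K * τ)) := by
        rw [ENNReal.ofReal_mul (p := ((N : ℝ) + 1) ^ (1 / q)) (by positivity),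
          ← ENNReal.ofReal_rpow_of_nonneg (by positivity) (by positivity)]
        norm_cast
    _ ≤ _ := ENNReal.ofReal_le_ofReal hreal

theorem statement16 {Ω : Type*} [MeasurableSpace Ω] (P : Measure Ω) [IsProbabilityMeasure P]
    (T : ℝ) (hT : 0 < T) (N : ℕ) (hN : 1 ≤ N) (τ : ℝ) (hτdef : τ = T / N) (hτ : τ ≤ 1)
    (X : ℕ → Ω → ℝ≥0) (hX : ∀ n ≤ N, Measurable (X n))
    (p q : ℝ) (hp : 1 ≤ p) (hpq : p ≤ q)
    (ε : ℝ) (hε : ε ∈ Set.Ioo (0 : ℝ) 1) (hqε : 1 ≤ q * ε)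
    (K : ℝ) (hK : 0 ≤ K)
    (hmom : ∀ n ≤ N, (∫⁻ ω, ((X n ω : ℝ≥0∞)) ^ q ∂P) ^ (1 / q) ≤ ENNReal.ofReal (K * τ)) :
    (∫⁻ ω, ((((Finset.Iic N).sup fun n => X n ω) : ℝ≥0∞)) ^ p ∂P) ^ (1 / p)
      ≤ ENNReal.ofReal ((2 * T) ^ (1 / q) * K * τ ^ (1 - ε)) :=
  statement16_general P T hT N hN τ hτdef hτ X hX p q hp hpq ε hqε K hK hmom
end
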